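/- arXiv:0809.4726 — 6 statements merged into one kernel-verified Lean document; each statement's English description precedes it below -/
import Mathlib

section
/- Let 0 < p < 1, let n be a positive integer, and let X be a binomial random variable with parameters n and p. Then for every real k with 0 ≤ k ≤ n·p, Pr(X ≤ k) ≤ exp(−n·Λ*(k/n)). -/
/-!
Chernoff's method: for `t ≥ 0` every index `i ≤ k` satisfies `1 ≤ exp (t (k - i))`, so the lower
tail is at most `exp (t k) · E[exp (-t X)] = exp (t k) (p e^{-t} + 1 - p)^n`. The choice
`e^{-t} = x (1 - p) / ((1 - x) p)` with `x = k / n` (admissible, i.e. `t ≥ 0`, exactly when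
`x ≤ p`) turns this bound into `exp (-n Λ*(x))`. The case `k = 0` is the exact identity
`Pr(X = 0) = (1 - p)^n = exp (-n Λ*(0))`.
-/

open MeasureTheory Filter
open scoped ENNReal NNReal

/-- The Bernoulli(p) measure on `Bool`. -/
noncomputable def bernoulliBool (p : ℝ) : Measure Bool :=
  p.toNNReal • Measure.dirac true + (1 - p).toNNReal • Measure.dirac false

instance (p : ℝ) : IsFiniteMeasure (bernoulliBool p) := by
  unfold bernoulliBool; infer_instance

instance (n : ℕ) : MeasurableSpace (SimpleGraph (Fin n)) := ⊤

/-- The Erdős–Rényi random graph `G(n,p)`: the distribution of the simple graph on `Fin n`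
obtained by including each possible edge independently with probability `p`. -/
noncomputable def erMeasure (n : ℕ) (p : ℝ) : Measure (SimpleGraph (Fin n)) :=
  Measure.map (fun f : Sym2 (Fin n) → Bool => SimpleGraph.fromEdgeSet {e | f e = true})
    (Measure.pi fun _ : Sym2 (Fin n) => bernoulliBool p)

/-- A set `S` of vertices is `t`-dependent if the induced subgraph has maximum degree at most `t`,
i.e. every vertex of `S` has at most `t` neighbours inside `S`. -/
def IsTDependent {V : Type*} (G : SimpleGraph V) (t : ℕ) (S : Set V) : Prop :=
  ∀ v ∈ S, {u ∈ S | G.Adj v u}.ncard ≤ t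

/-- The `t`-improper chromatic number: the least number of colours in a vertex colouring
in which every colour class is `t`-dependent. -/
noncomputable def improperChromaticNumber {V : Type*} (G : SimpleGraph V) (t : ℕ) : ℕ :=
  sInf {k | ∃ c : V → Fin k, ∀ i : Fin k, IsTDependent G t {v | c v = i}}

/-- The `t`-dependence number: the maximum size of a `t`-dependent set. -/
noncomputable def tDependenceNumber {V : Type*} (G : SimpleGraph V) (t : ℕ) : ℕ :=
  sSup {m | ∃ S : Set V, S.ncard = m ∧ IsTDependent G t S}

/-- The Fenchel–Legendre transform `Λ*(x) = x ln(x/p) + (1-x) ln((1-x)/(1-p))`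
(with the conventions `Λ*(0) = ln(1/(1-p))`, `Λ*(1) = ln(1/p)`, which hold automatically
since `Real.log 0 = 0` in Lean). -/
noncomputable def LambdaStar (p x : ℝ) : ℝ :=
  x * Real.log (x / p) + (1 - x) * Real.log ((1 - x) / (1 - p))

open Finset Real

theorem binomial_lowerTail_le_exp_mul_pow {p q t k : ℝ} (n : ℕ) (hp : 0 ≤ p) (hq : 0 ≤ q)
    (ht : 0 ≤ t) (hk0 : 0 ≤ k) (hkn : k ≤ n) :
    ∑ i ∈ range (⌊k⌋₊ + 1), (n.choose i : ℝ) * p ^ i * q ^ (n - i)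
      ≤ exp (t * k) * (p * exp (-t) + q) ^ n := by
  calc ∑ i ∈ range (⌊k⌋₊ + 1), (n.choose i : ℝ) * p ^ i * q ^ (n - i)
      ≤ ∑ i ∈ range (⌊k⌋₊ + 1), exp (t * (k - i)) * ((n.choose i : ℝ) * p ^ i * q ^ (n - i)) := by
        refine sum_le_sum fun i hi => le_mul_of_one_le_left (by positivity) (one_le_exp ?_)
        have hik : (i : ℝ) ≤ k :=
          (Nat.cast_le.mpr (Nat.lt_succ_iff.mp (mem_range.mp hi))).trans (Nat.floor_le hk0)
        exact mul_nonneg ht (sub_nonneg.mpr hik)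
    _ = exp (t * k) * ∑ i ∈ range (⌊k⌋₊ + 1), (p * exp (-t)) ^ i * q ^ (n - i) * n.choose i := by
        rw [mul_sum]
        refine sum_congr rfl fun i _ => ?_
        have hexp : exp (t * (k - i)) = exp (t * k) * exp (-t) ^ i := by
          rw [← exp_nat_mul, ← exp_add]
          ring_nf
        rw [hexp, mul_pow]
        ring
    _ ≤ exp (t * k) * ∑ i ∈ range (n + 1), (p * exp (-t)) ^ i * q ^ (n - i) * n.choose i := by
        gcongr
        exact Nat.floor_le_of_le hkn
    _ = exp (t * k) * (p * exp (-t) + q) ^ n := by rw [add_pow]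

theorem LambdaStar_zero (p : ℝ) : LambdaStar p 0 = -log (1 - p) := by
  simp [LambdaStar]

theorem exp_mul_pow_eq_exp_neg_LambdaStar {p x : ℝ} (n : ℕ) (hp0 : 0 < p) (hp1 : p < 1)
    (hx0 : 0 < x) (hx1 : x < 1) :
    exp (log ((1 - x) * p / (x * (1 - p))) * (n * x))
        * (p * exp (-log ((1 - x) * p / (x * (1 - p)))) + (1 - p)) ^ n
      = exp (-(n * LambdaStar p x)) := by
  have hq : (0 : ℝ) < 1 - p := by linarith
  have hy : (0 : ℝ) < 1 - x := by linarith
  have hmgf : p * exp (-log ((1 - x) * p / (x * (1 - p)))) + (1 - p) = (1 - p) / (1 - x) := by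
    rw [exp_neg, exp_log (by positivity)]
    field_simp
    ring
  rw [hmgf, ← exp_log (show 0 < (1 - p) / (1 - x) by positivity), ← exp_nat_mul, ← exp_add,
    LambdaStar]
  congr 1
  rw [log_div (by positivity) (by positivity), log_mul hy.ne' hp0.ne', log_mul hx0.ne' hq.ne',
    log_div hq.ne' hy.ne', log_div hx0.ne' hp0.ne', log_div hy.ne' hq.ne']
  ring

theorem stmt4_general (p : ℝ) (hp0 : 0 < p) (hp1 : p < 1) (n : ℕ)
    (k : ℝ) (hk0 : 0 ≤ k) (hk : k ≤ (n : ℝ) * p) :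
    ∑ i ∈ Finset.range (Nat.floor k + 1),
        (n.choose i : ℝ) * p ^ i * (1 - p) ^ (n - i)
      ≤ Real.exp (-((n : ℝ) * LambdaStar p (k / n))) := by
  rcases hk0.eq_or_lt with rfl | hk_pos
  · rw [zero_div, LambdaStar_zero, mul_neg, neg_neg, exp_nat_mul, exp_log (by linarith)]
    simp
  have hn_pos : (0 : ℝ) < n := pos_of_mul_pos_left (hk_pos.trans_le hk) hp0.le
  have hx_le : k / n ≤ p := by rwa [div_le_iff₀ hn_pos, mul_comm]
  have hkn : k ≤ n := hk.trans (mul_le_of_le_one_right hn_pos.le hp1.le)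
  have ht : 0 ≤ log ((1 - k / n) * p / (k / n * (1 - p))) := by
    refine log_nonneg ((one_le_div (by positivity)).mpr ?_)
    linarith
  refine (binomial_lowerTail_le_exp_mul_pow n hp0.le (by linarith) ht hk0 hkn).trans_eq ?_
  rw [← exp_mul_pow_eq_exp_neg_LambdaStar n hp0 hp1 (by positivity) (by linarith),
    mul_div_cancel₀ k hn_pos.ne']

/-- Chernoff upper bound for the lower tail of the binomial distribution:
for `X ∈ Bin(n,p)` and real `0 ≤ k ≤ np`, `Pr(X ≤ k) ≤ exp(-n·Λ*(k/n))`.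
Here `Pr(X ≤ k) = ∑_{0 ≤ i ≤ k} C(n,i) p^i (1-p)^{n-i} = ∑_{i=0}^{⌊k⌋} C(n,i) p^i (1-p)^{n-i}`. -/
theorem stmt4 (p : ℝ) (hp0 : 0 < p) (hp1 : p < 1) (n : ℕ) (hn : 0 < n)
    (k : ℝ) (hk0 : 0 ≤ k) (hk : k ≤ (n : ℝ) * p) :
    ∑ i ∈ Finset.range (Nat.floor k + 1),
        (n.choose i : ℝ) * p ^ i * (1 - p) ^ (n - i)
      ≤ Real.exp (-((n : ℝ) * LambdaStar p (k / n))) :=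
  stmt4_general p hp0 hp1 n k hk0 hk
end

section
/- There is an absolute constant δ > 0 (one may take δ = (2π)^{−1/2} e^{−1/6}) such that for every 0 < p < 1, every positive integer n, every binomial random variable X with parameters n and p, and every positive integer k with k ≤ n·p, one has Pr(X ≤ k) ≥ δ · max{k^{−1/2}, (n−k)^{−1/2}} · exp(−n·Λ*(k/n)). -/
open MeasureTheory Filter
open scoped ENNReal NNReal

open Stirling

noncomputable def myA : ℝ := Stirling.stirlingSeq'_bounded_by_pos_constant.choose

lemma myA_pos : 0 < myA := Stirling.stirlingSeq'_bounded_by_pos_constant.choose_spec.1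

lemma myA_le {n : ℕ} (hn : 0 < n) : myA ≤ Stirling.stirlingSeq n := by
  obtain ⟨m, rfl⟩ := Nat.exists_eq_succ_of_ne_zero hn.ne'
  exact Stirling.stirlingSeq'_bounded_by_pos_constant.choose_spec.2 m

lemma stirling_le {n : ℕ} (hn : 0 < n) :
    Stirling.stirlingSeq n ≤ Real.exp 1 / Real.sqrt 2 := by
  obtain ⟨m, rfl⟩ := Nat.exists_eq_succ_of_ne_zero hn.ne'
  have := Stirling.stirlingSeq'_antitone (Nat.zero_le m)
  simpa [Stirling.stirlingSeq_one] using this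

lemma stirling_pos {n : ℕ} (hn : 0 < n) : 0 < Stirling.stirlingSeq n :=
  lt_of_lt_of_le myA_pos (myA_le hn)

lemma factorial_eq (n : ℕ) (hn : 0 < n) :
    (n.factorial : ℝ) = Stirling.stirlingSeq n * (Real.sqrt (2 * n) * ((n : ℝ) / Real.exp 1) ^ n) := by
  have h0 : (0 : ℝ) < n := by exact_mod_cast hn
  rw [Stirling.stirlingSeq]
  field_simp

lemma key (k m : ℕ) (hk : 0 < k) (hm : 0 < m) :
    (((k + m).choose k : ℝ)) * (k : ℝ) ^ k * (m : ℝ) ^ m / ((k : ℝ) + m) ^ (k + m)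
      = Stirling.stirlingSeq (k + m) / (Stirling.stirlingSeq k * Stirling.stirlingSeq m)
        * (Real.sqrt (2 * (k + m)) / (Real.sqrt (2 * k) * Real.sqrt (2 * m))) := by
  have hn : 0 < k + m := by omega
  have hfk : (0:ℝ) < k.factorial := by exact_mod_cast k.factorial_pos
  have hfm : (0:ℝ) < m.factorial := by exact_mod_cast m.factorial_pos
  have hC : (((k + m).choose k : ℝ)) = ((k + m).factorial : ℝ) / ((k.factorial : ℝ) * (m.factorial : ℝ)) := by
    rw [eq_div_iff (by positivity)]
    have := Nat.add_choose_mul_factorial_mul_factorial k m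
    rw [Nat.choose_symm_add]; push_cast [← this]
    ring
  have hk0 : (0:ℝ) < k := by exact_mod_cast hk
  have hm0 : (0:ℝ) < m := by exact_mod_cast hm
  have hsk := stirling_pos hk
  have hsm := stirling_pos hm
  have hsn := stirling_pos hn
  have h2k : (0:ℝ) < Real.sqrt (2*k) := by positivity
  have h2m : (0:ℝ) < Real.sqrt (2*m) := by positivity
  have h2n : (0:ℝ) < Real.sqrt (2*(k+m)) := by positivity
  rw [hC, factorial_eq _ hn, factorial_eq _ hk, factorial_eq _ hm]
  push_cast
  rw [div_pow, div_pow, div_pow, pow_add (Real.exp 1)]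
  have he : (0:ℝ) < Real.exp 1 := Real.exp_pos 1
  field_simp

noncomputable def Bconst : ℝ := Real.exp 1 / Real.sqrt 2

lemma Bconst_pos : 0 < Bconst := by simp only [Bconst]; positivity

noncomputable def delta1 : ℝ := myA / (Bconst ^ 2 * Real.sqrt 2)

lemma delta1_pos : 0 < delta1 :=
  div_pos myA_pos (by have := Bconst_pos; positivity)

lemma choose_bound (k m : ℕ) (hk : 0 < k) (hm : 0 < m) :
    delta1 * max (Real.sqrt k)⁻¹ (Real.sqrt m)⁻¹
      ≤ ((k + m).choose k : ℝ) * (k : ℝ) ^ k * (m : ℝ) ^ m / ((k : ℝ) + m) ^ (k + m) := by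
  rw [key k m hk hm]
  have hB : 0 < Bconst := Bconst_pos
  have hk0 : (0:ℝ) < k := by exact_mod_cast hk
  have hm0 : (0:ℝ) < m := by exact_mod_cast hm
  have hsk := stirling_pos hk
  have hsm := stirling_pos hm
  have hsn := stirling_pos (show 0 < k + m by omega)
  have hf1 : myA / Bconst ^ 2 ≤
      Stirling.stirlingSeq (k + m) / (Stirling.stirlingSeq k * Stirling.stirlingSeq m) := by
    apply div_le_div₀ hsn.le (myA_le (by omega)) (by positivity)
    calc Stirling.stirlingSeq k * Stirling.stirlingSeq m ≤ Bconst * Bconst :=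
          mul_le_mul (stirling_le hk) (stirling_le hm) hsm.le hB.le
      _ = Bconst ^ 2 := (sq Bconst).symm
  have key2 : ∀ a b : ℕ, 0 < a → 0 < b →
      (Real.sqrt 2 * Real.sqrt a)⁻¹
        ≤ Real.sqrt (2 * ((a : ℝ) + b)) / (Real.sqrt (2 * a) * Real.sqrt (2 * b)) := by
    intro a b ha hb
    have ha0 : (0:ℝ) < a := by exact_mod_cast ha
    have hb0 : (0:ℝ) < b := by exact_mod_cast hb
    rw [le_div_iff₀ (by positivity), Real.sqrt_mul (by norm_num : (0:ℝ) ≤ 2) (a:ℝ)]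
    have h1 : (Real.sqrt 2 * Real.sqrt a)⁻¹ * (Real.sqrt 2 * Real.sqrt a * Real.sqrt (2 * b))
        = Real.sqrt (2 * b) := by
      field_simp
    rw [h1]
    exact Real.sqrt_le_sqrt (by nlinarith)
  rcases max_cases (Real.sqrt (k:ℝ))⁻¹ (Real.sqrt (m:ℝ))⁻¹ with ⟨hmx, _⟩ | ⟨hmx, _⟩ <;> rw [hmx]
  · have h2 := key2 k m hk hm
    have e : delta1 * (Real.sqrt (k:ℝ))⁻¹
        = myA / Bconst ^ 2 * (Real.sqrt 2 * Real.sqrt (k:ℝ))⁻¹ := by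
      simp only [delta1]; rw [mul_inv]; ring
    rw [e]
    exact mul_le_mul hf1 h2 (by positivity) (by positivity)
  · have h2 := key2 m k hm hk
    rw [add_comm (m:ℝ) (k:ℝ), mul_comm (Real.sqrt (2 * (m:ℝ))) (Real.sqrt (2 * (k:ℝ)))] at h2
    have e : delta1 * (Real.sqrt (m:ℝ))⁻¹
        = myA / Bconst ^ 2 * (Real.sqrt 2 * Real.sqrt (m:ℝ))⁻¹ := by
      simp only [delta1]; rw [mul_inv]; ring
    rw [e]
    exact mul_le_mul hf1 h2 (by positivity) (by positivity)

/-- There is an absolute constant `δ > 0` such that for `X ∈ Bin(n,p)` and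
every positive integer `k ≤ np`,
`Pr(X ≤ k) ≥ δ·max{k^{-1/2}, (n-k)^{-1/2}}·exp(-n·Λ*(k/n))`. -/
theorem stmt5 :
    ∃ δ : ℝ, 0 < δ ∧
      ∀ p : ℝ, 0 < p → p < 1 → ∀ n k : ℕ, 0 < n → 0 < k → (k : ℝ) ≤ (n : ℝ) * p →
        δ * max ((k : ℝ) ^ (-(1/2) : ℝ)) (((n : ℝ) - (k : ℝ)) ^ (-(1/2) : ℝ)) *
            Real.exp (-((n : ℝ) * LambdaStar p ((k : ℝ) / n)))
          ≤ ∑ i ∈ Finset.range (k + 1), (n.choose i : ℝ) * p ^ i * (1 - p) ^ (n - i) := by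
  refine ⟨delta1, delta1_pos, ?_⟩
  intro p hp hp1 n k hn hk hknp
  have hq : 0 < 1 - p := by linarith
  have hn0 : (0:ℝ) < n := by exact_mod_cast hn
  have hkn : k < n := by
    by_contra h
    push_neg at h
    have h' : (n:ℝ) ≤ k := by exact_mod_cast h
    nlinarith
  set m := n - k with hm_def
  have hm : 0 < m := by omega
  have hnkm : n = k + m := by omega
  have hm0 : (0:ℝ) < m := by exact_mod_cast hm
  have hk0 : (0:ℝ) < k := by exact_mod_cast hk
  have hcast : ((n:ℝ) - k) = (m:ℝ) := by
    rw [hnkm]; push_cast; ring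
  set X : ℝ := (k:ℝ)/n with hX
  have hX0 : 0 < X := by positivity
  have hX1 : 0 < 1 - X := by
    rw [hX, sub_pos]
    exact (div_lt_one hn0).mpr (by exact_mod_cast hkn)
  have h1X : 1 - X = (m:ℝ)/n := by
    rw [hX]; field_simp; rw [hcast]
  have hsum : (n.choose k : ℝ) * p ^ k * (1-p) ^ m
      ≤ ∑ i ∈ Finset.range (k+1), (n.choose i : ℝ) * p ^ i * (1-p) ^ (n - i) := by
    have := Finset.single_le_sum (f := fun i => (n.choose i : ℝ) * p ^ i * (1-p) ^ (n - i))
      (fun i _ => by positivity) (Finset.self_mem_range_succ k)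
    simpa [← hm_def] using this
  refine le_trans ?_ hsum
  have hnX : (n:ℝ) * X = k := by rw [hX]; field_simp
  have hnX1 : (n:ℝ) * (1 - X) = m := by rw [mul_sub, mul_one, hnX, hcast]
  have hΛ : (n:ℝ) * LambdaStar p X = (k:ℝ) * Real.log (X/p) + (m:ℝ) * Real.log ((1-X)/(1-p)) := by
    rw [LambdaStar, mul_add, ← mul_assoc, ← mul_assoc, hnX, hnX1]
  have hexp : Real.exp (-((n:ℝ) * LambdaStar p X)) = (p/X)^k * ((1-p)/(1-X))^m := by
    rw [hΛ]
    have l1 : Real.log (X/p) = - Real.log (p/X) := by rw [← Real.log_inv, inv_div]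
    have l2 : Real.log ((1-X)/(1-p)) = - Real.log ((1-p)/(1-X)) := by
      rw [← Real.log_inv, inv_div]
    rw [l1, l2, show -((k:ℝ) * -Real.log (p/X) + (m:ℝ) * -Real.log ((1-p)/(1-X)))
        = (k:ℝ) * Real.log (p/X) + (m:ℝ) * Real.log ((1-p)/(1-X)) by ring,
      Real.exp_add, Real.exp_nat_mul, Real.exp_nat_mul,
      Real.exp_log (by positivity), Real.exp_log (by positivity)]
  rw [hexp]
  have hpk : p ^ k = X ^ k * (p/X) ^ k := by
    rw [← mul_pow]; congr 1; field_simp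
  have hqm : (1-p) ^ m = (1-X) ^ m * ((1-p)/(1-X)) ^ m := by
    rw [← mul_pow]; congr 1; field_simp
  have hM : max ((k:ℝ) ^ (-(1/2) : ℝ)) (((n:ℝ) - k) ^ (-(1/2) : ℝ))
      = max (Real.sqrt (k:ℝ))⁻¹ (Real.sqrt (m:ℝ))⁻¹ := by
    rw [hcast]
    congr 1 <;>
      rw [Real.rpow_neg (by positivity), ← Real.sqrt_eq_rpow]
  have hfin : (n.choose k : ℝ) * X ^ k * (1-X) ^ m
      = ((k + m).choose k : ℝ) * (k:ℝ) ^ k * (m:ℝ) ^ m / ((k:ℝ) + m) ^ (k + m) := by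
    have hnr : (k:ℝ) + m = (n:ℝ) := by rw [hnkm]; push_cast; ring
    rw [hX, h1X, div_pow, div_pow, show (k+m).choose k = n.choose k by rw [hnkm], hnr,
      show (n:ℝ) ^ (k + m) = (n:ℝ) ^ k * (n:ℝ) ^ m from pow_add _ _ _]
    field_simp
  have hmain : delta1 * max ((k:ℝ) ^ (-(1/2) : ℝ)) (((n:ℝ) - k) ^ (-(1/2) : ℝ))
      ≤ (n.choose k : ℝ) * X ^ k * (1-X) ^ m := by
    rw [hM, hfin]
    exact choose_bound k m hk hm
  calc delta1 * max ((k:ℝ) ^ (-(1/2) : ℝ)) (((n:ℝ) - k) ^ (-(1/2) : ℝ)) *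
        ((p/X)^k * ((1-p)/(1-X))^m)
      ≤ ((n.choose k : ℝ) * X ^ k * (1-X) ^ m) * ((p/X)^k * ((1-p)/(1-X))^m) :=
        mul_le_mul_of_nonneg_right hmain (by positivity)
    _ = (n.choose k : ℝ) * p ^ k * (1-p) ^ m := by rw [hpk, hqm]; ring
end

section
/- Let δ = (2π)^{−1/2} e^{−1/6}. For every 0 < p < 1 with q = 1 − p, and all integers n, k with 1 ≤ k ≤ n−1, the single binomial term satisfies C(n,k)·p^k·q^{n−k} ≥ δ · max{k^{−1/2}, (n−k)^{−1/2}} · exp(−n·Λ*(k/n)). -/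
/-!
Since `p^k (1-p)^(n-k) = (k/n)^k ((n-k)/n)^(n-k) exp(-n Λ*(k/n))`, it suffices to bound
`C(n,k) (k/n)^k ((n-k)/n)^(n-k)` from below. The Stirling ratio `m! / (√(2m) (m/e)^m)` decreases
from `e/√2` at `m = 1` to its limit `√π`, so this quantity is at least
`√(2π) e⁻² √(n / (k(n-k)))`. Finally `n / (k(n-k)) = 1/k + 1/(n-k)` dominates both `1/k` and
`1/(n-k)`, and `√(2π) e⁻² ≥ (2π)^(-1/2) e^(-1/6)` because `e^(11/6) ≤ 2π`.
-/

open MeasureTheory Filter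
open scoped ENNReal NNReal

open Real
open scoped Nat

lemma exp_eleven_sixths_le_two_pi : exp (11 / 6) ≤ 2 * π := by
  have hpow : exp (11 / 6) ^ 6 ≤ (2 * π) ^ 6 :=
    calc exp (11 / 6) ^ 6 = exp 1 ^ 11 := by rw [← exp_nat_mul, ← exp_nat_mul]; norm_num
      _ ≤ 2.7182818286 ^ 11 := by gcongr; exact exp_one_lt_d9.le
      _ ≤ (2 * 3.141592) ^ 6 := by norm_num
      _ ≤ (2 * π) ^ 6 := by gcongr; exact pi_gt_d6.le
  exact le_of_pow_le_pow_left₀ (by norm_num) (by positivity) hpow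

lemma two_pi_rpow_neg_half_mul_exp_le :
    (2 * π) ^ (-(1 / 2) : ℝ) * exp (-(1 / 6)) ≤ √(2 * π) / exp 2 := by
  have hsqrt : 0 < √(2 * π) := by positivity
  rw [rpow_neg (by positivity), ← sqrt_eq_rpow, inv_mul_eq_div,
    div_le_div_iff₀ hsqrt (exp_pos 2), ← exp_add, mul_self_sqrt (by positivity)]
  exact le_trans (by norm_num) exp_eleven_sixths_le_two_pi

lemma max_rpow_neg_half_le_sqrt {x y : ℝ} (hx : 0 < x) (hy : 0 < y) :
    max (x ^ (-(1 / 2) : ℝ)) (y ^ (-(1 / 2) : ℝ)) ≤ √((x + y) / (x * y)) := by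
  have hsum : (x + y) / (x * y) = x⁻¹ + y⁻¹ := by field_simp; ring
  rw [rpow_neg hx.le, rpow_neg hy.le, ← sqrt_eq_rpow, ← sqrt_eq_rpow, ← sqrt_inv, ← sqrt_inv,
    hsum]
  exact max_le (sqrt_le_sqrt (by linarith [inv_pos.2 hy]))
    (sqrt_le_sqrt (by linarith [inv_pos.2 hx]))

namespace Stirling

lemma stirlingSeq_le_stirlingSeq_one {n : ℕ} (hn : n ≠ 0) : stirlingSeq n ≤ stirlingSeq 1 := by
  obtain ⟨m, rfl⟩ := Nat.exists_eq_succ_of_ne_zero hn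
  exact stirlingSeq'_antitone (Nat.zero_le m)

lemma factorial_le_exp_one_mul_sqrt_mul_pow {n : ℕ} (hn : n ≠ 0) :
    (n ! : ℝ) ≤ exp 1 * √n * (n / exp 1) ^ n := by
  have hpos : 0 < √(2 * n : ℝ) * (n / exp 1) ^ n := by positivity
  have h := stirlingSeq_le_stirlingSeq_one hn
  rw [stirlingSeq, stirlingSeq_one, div_le_iff₀ hpos] at h
  calc (n ! : ℝ) ≤ exp 1 / √2 * (√(2 * n) * (n / exp 1) ^ n) := h
    _ = exp 1 * √n * (n / exp 1) ^ n := by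
      rw [sqrt_mul (by norm_num)]; field_simp

end Stirling

open Stirling in
lemma sqrt_two_pi_div_exp_two_mul_sqrt_le_choose_mul_pow {n k : ℕ} (hk : 0 < k) (hkn : k < n) :
    √(2 * π) / exp 2 * √(n / (k * (n - k))) ≤
      n.choose k * ((k : ℝ) / n) ^ k * (((n : ℝ) - k) / n) ^ (n - k) := by
  set j := n - k with hj
  have hnkj : n = k + j := by omega
  have hcast : ((n : ℝ) - k) = j := by rw [hj, Nat.cast_sub hkn.le]
  have hk' : (0 : ℝ) < k := by exact_mod_cast hk
  have hj' : (0 : ℝ) < j := by rw [← hcast, sub_pos]; exact_mod_cast hkn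
  have hn' : (0 : ℝ) < n := by exact_mod_cast hk.trans hkn
  have hpow : ((n : ℝ) / exp 1) ^ n * (((k : ℝ) / n) ^ k * ((j : ℝ) / n) ^ j) =
      ((k : ℝ) / exp 1) ^ k * ((j : ℝ) / exp 1) ^ j := by
    rw [hnkj, pow_add, ← hnkj]
    simp only [div_pow]
    field_simp
  rw [hcast, Nat.cast_choose ℝ hkn.le, ← hj]
  calc √(2 * π) / exp 2 * √(n / (k * j))
      = √(2 * π * n) * (n / exp 1) ^ n /
          ((exp 1 * √k * (k / exp 1) ^ k) * (exp 1 * √j * (j / exp 1) ^ j)) *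
          (((k : ℝ) / n) ^ k * ((j : ℝ) / n) ^ j) := by
        rw [sqrt_mul (by positivity) (n : ℝ),
          sqrt_div hn'.le, sqrt_mul hk'.le, show (2 : ℝ) = 1 + 1 by norm_num, exp_add]
        field_simp
        rw [mul_assoc, hpow]
    _ ≤ n ! / (k ! * j !) * (((k : ℝ) / n) ^ k * ((j : ℝ) / n) ^ j) := by
        gcongr
        · exact le_factorial_stirling n
        · exact factorial_le_exp_one_mul_sqrt_mul_pow hk.ne'
        · exact factorial_le_exp_one_mul_sqrt_mul_pow (by omega)
    _ = _ := by ring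

lemma pow_mul_pow_eq_mul_exp_neg_lambdaStar {p : ℝ} (hp0 : 0 < p) (hp1 : p < 1) {n k : ℕ}
    (hk : 0 < k) (hkn : k < n) :
    p ^ k * (1 - p) ^ (n - k) =
      ((k : ℝ) / n) ^ k * (((n : ℝ) - k) / n) ^ (n - k) *
        exp (-((n : ℝ) * LambdaStar p ((k : ℝ) / n))) := by
  have hk' : (0 : ℝ) < k := by exact_mod_cast hk
  have hn' : (0 : ℝ) < n := by exact_mod_cast hk.trans hkn
  have hnk : (0 : ℝ) < n - k := by rw [sub_pos]; exact_mod_cast hkn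
  have hq : 0 < 1 - p := by linarith
  have hcast : ((n - k : ℕ) : ℝ) = n - k := Nat.cast_sub hkn.le
  have hexp : exp ((n : ℝ) * LambdaStar p ((k : ℝ) / n)) =
      ((k / n) / p) ^ k * (((n - k) / n) / (1 - p)) ^ (n - k) := by
    rw [LambdaStar, show 1 - (k : ℝ) / n = (n - k) / n by field_simp, mul_add, exp_add,
      ← mul_assoc, ← mul_assoc, mul_div_cancel₀ _ hn'.ne',
      mul_div_cancel₀ _ hn'.ne', ← hcast, exp_nat_mul, exp_nat_mul, hcast,
      exp_log (by positivity), exp_log (by positivity)]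
  rw [exp_neg, hexp]
  simp only [div_pow]
  field_simp

/-- With `δ = (2π)^{-1/2}·e^{-1/6}`, for all `0 < p < 1` and integers
`1 ≤ k ≤ n-1`, the binomial term satisfies
`C(n,k)·p^k·(1-p)^{n-k} ≥ δ·max{k^{-1/2}, (n-k)^{-1/2}}·exp(-n·Λ*(k/n))`. -/
theorem stmt6 (p : ℝ) (hp0 : 0 < p) (hp1 : p < 1) (n k : ℕ) (hk1 : 1 ≤ k) (hkn : k < n) :
    ((2 * Real.pi) ^ (-(1/2) : ℝ) * Real.exp (-(1/6))) *
        max ((k : ℝ) ^ (-(1/2) : ℝ)) (((n : ℝ) - (k : ℝ)) ^ (-(1/2) : ℝ)) *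
        Real.exp (-((n : ℝ) * LambdaStar p ((k : ℝ) / n)))
      ≤ (n.choose k : ℝ) * p ^ k * (1 - p) ^ (n - k) := by
  have hk : (0 : ℝ) < k := by exact_mod_cast hk1
  have hnk : (0 : ℝ) < n - k := by rw [sub_pos]; exact_mod_cast hkn
  calc _ ≤ √(2 * π) / exp 2 * √(n / (k * (n - k))) *
        exp (-((n : ℝ) * LambdaStar p ((k : ℝ) / n))) := by
        gcongr
        · exact two_pi_rpow_neg_half_mul_exp_le
        · simpa only [add_sub_cancel] using max_rpow_neg_half_le_sqrt hk hnk
    _ ≤ n.choose k * ((k : ℝ) / n) ^ k * (((n : ℝ) - k) / n) ^ (n - k) *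
        exp (-((n : ℝ) * LambdaStar p ((k : ℝ) / n))) :=
        mul_le_mul_of_nonneg_right
          (sqrt_two_pi_div_exp_two_mul_sqrt_le_choose_mul_pow hk1 hkn) (exp_pos _).le
    _ = (n.choose k : ℝ) * p ^ k * (1 - p) ^ (n - k) := by
        rw [mul_assoc _ (p ^ k), pow_mul_pow_eq_mul_exp_neg_lambdaStar hp0 hp1 hk1 hkn]
        ring
end

section
/- Fix 0 < p < 1. For every τ ≥ 0 there is a unique real number κ_p(τ) > τ/p such that the function g(κ) = (κ/2)·Λ*(τ/κ) satisfies: g(κ) < 1 for all κ with τ/p < κ < κ_p(τ), g(κ_p(τ)) = 1, and g(κ) > 1 for all κ > κ_p(τ). -/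
open MeasureTheory Filter
open scoped ENNReal NNReal

/-!
Write `q = 1 - p`. For `κ ≠ 0`, `κ·Λ*(τ/κ) = τ log τ + (κ-τ) log(κ-τ) - κ log κ - τ log p - (κ-τ) log q`,
whose derivative in `κ` is `log ((κ - τ) / (κ q))`; it is positive exactly when `τ < κ p`.
So `g` increases strictly on `(τ/p, ∞)`, starts from `g(τ/p) = (τ/2p)·Λ*(p) = 0`, and grows like
`(κ/2)·Λ*(0) = (κ/2)·ln(1/q)` at infinity, hence crosses the level `1` exactly once.
-/

open Real Set Topology

theorem existsUnique_crossing_of_strictMonoOn_Ioi {f : ℝ → ℝ} {a l c : ℝ}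
    (hcont : ContinuousOn f (Ioi a)) (hmono : StrictMonoOn f (Ioi a))
    (hl : Tendsto f (𝓝[>] a) (𝓝 l)) (hlc : l < c) (htop : Tendsto f atTop atTop) :
    ∃! x, a < x ∧ (∀ y, a < y → y < x → f y < c) ∧ f x = c ∧ ∀ y, x < y → c < f y := by
  obtain ⟨x₁, hfx₁, hax₁⟩ := ((hl.eventually (gt_mem_nhds hlc)).and self_mem_nhdsWithin).exists
  obtain ⟨x₂, hfx₂, hx₁₂⟩ := ((htop.eventually_ge_atTop c).and (eventually_ge_atTop x₁)).exists
  obtain ⟨x, ⟨hx₁x, -⟩, hfx⟩ := intermediate_value_Icc hx₁₂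
    (hcont.mono ((Icc_subset_Ioi_iff hx₁₂).mpr hax₁)) ⟨hfx₁.le, hfx₂⟩
  have hax : a < x := hax₁.trans_le hx₁x
  refine ⟨x, ⟨hax, fun y hay hyx => hfx ▸ hmono hay hax hyx, hfx,
    fun y hxy => hfx ▸ hmono hax (hax.trans hxy) hxy⟩, ?_⟩
  rintro x' ⟨hax', -, hfx', -⟩
  exact hmono.injOn hax' hax (hfx'.trans hfx.symm)

theorem continuous_mul_log_div (r : ℝ) : Continuous fun y => y * log (y / r) := by
  have h : (fun y => y * log (y / r)) = fun y => r * (y / r * log (y / r)) := by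
    funext y
    rcases eq_or_ne r 0 with rfl | hr
    · simp
    · field_simp
  rw [h]
  exact continuous_const.mul (continuous_id.div_const r).mul_log

theorem continuous_lambdaStar (p : ℝ) : Continuous (LambdaStar p) :=
  (continuous_mul_log_div p).add
    ((continuous_mul_log_div (1 - p)).comp (continuous_const.sub continuous_id))

theorem lambdaStar_zero_pos {p : ℝ} (hp0 : 0 < p) (hp1 : p < 1) : 0 < LambdaStar p 0 := by
  simpa [LambdaStar] using log_neg (by linarith) (by linarith : 1 - p < 1)

/-- The perspective `κ ↦ κ * LambdaStar p (τ / κ)` in closed form (`mul_lambdaStar_div`), which is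
continuous at `κ = 0` and differentiable in `κ` also when `τ = 0`. -/
noncomputable def lambdaStarPersp (p τ κ : ℝ) : ℝ :=
  τ * log τ + (κ - τ) * log (κ - τ) - κ * log κ - τ * log p - (κ - τ) * log (1 - p)

theorem mul_log_div_div (y : ℝ) {a b : ℝ} (ha : a ≠ 0) (hb : b ≠ 0) :
    y * log (y / a / b) = y * log y - y * log a - y * log b := by
  rcases eq_or_ne y 0 with rfl | hy
  · simp
  · rw [log_div (div_ne_zero hy ha) hb, log_div hy ha]
    ring

theorem mul_lambdaStar_div {p τ κ : ℝ} (hp0 : p ≠ 0) (hp1 : p ≠ 1) (hκ : κ ≠ 0) :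
    κ * LambdaStar p (τ / κ) = lambdaStarPersp p τ κ := by
  have hq : 1 - p ≠ 0 := sub_ne_zero.mpr hp1.symm
  have h1 : κ * (τ / κ) = τ := mul_div_cancel₀ τ hκ
  have h2 : κ * (1 - τ / κ) = κ - τ := by field_simp
  have h3 : 1 - τ / κ = (κ - τ) / κ := by field_simp
  calc κ * LambdaStar p (τ / κ)
      = τ * log (τ / κ / p) + (κ - τ) * log ((κ - τ) / κ / (1 - p)) := by
        rw [LambdaStar, mul_add, ← mul_assoc, h1, ← mul_assoc, h2, h3]
    _ = lambdaStarPersp p τ κ := by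
        rw [mul_log_div_div _ hκ hp0, mul_log_div_div _ hκ hq, lambdaStarPersp]
        ring

theorem lambdaStarPersp_div_self {p : ℝ} (hp0 : p ≠ 0) (hp1 : p ≠ 1) (τ : ℝ) :
    lambdaStarPersp p τ (τ / p) = 0 := by
  rcases eq_or_ne τ 0 with rfl | hτ
  · simp [lambdaStarPersp]
  · rw [← mul_lambdaStar_div hp0 hp1 (div_ne_zero hτ hp0), div_div_cancel₀ hτ]
    simp [LambdaStar, div_self hp0, div_self (sub_ne_zero.mpr hp1.symm)]

theorem continuous_lambdaStarPersp (p τ : ℝ) : Continuous (lambdaStarPersp p τ) := by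
  unfold lambdaStarPersp
  fun_prop

theorem hasDerivAt_lambdaStarPersp (p τ : ℝ) {κ : ℝ} (hκ : κ ≠ 0) (hκτ : κ - τ ≠ 0) :
    HasDerivAt (lambdaStarPersp p τ) (log (κ - τ) - log κ - log (1 - p)) κ := by
  have hsub : HasDerivAt (fun x => (x - τ) * log (x - τ)) (log (κ - τ) + 1) κ :=
    (hasDerivAt_mul_log hκτ).comp_sub_const κ τ
  have hlin : HasDerivAt (fun x => τ * log τ - τ * log p - (x - τ) * log (1 - p))
      (-log (1 - p)) κ := by
    simpa using (((hasDerivAt_id κ).sub_const τ).mul_const (log (1 - p))).const_sub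
      (τ * log τ - τ * log p)
  have e : lambdaStarPersp p τ = fun x =>
      ((x - τ) * log (x - τ) - x * log x) + (τ * log τ - τ * log p - (x - τ) * log (1 - p)) := by
    funext x
    simp only [lambdaStarPersp]
    ring
  rw [e]
  exact ((hsub.sub (hasDerivAt_mul_log hκ)).add hlin).congr_deriv (by ring)

theorem strictMonoOn_lambdaStarPersp {p τ : ℝ} (hp0 : 0 < p) (hp1 : p < 1) (hτ : 0 ≤ τ) :
    StrictMonoOn (lambdaStarPersp p τ) (Ici (τ / p)) := by
  refine strictMonoOn_of_deriv_pos (convex_Ici _) (continuous_lambdaStarPersp p τ).continuousOn ?_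
  intro κ hκ
  rw [interior_Ici, mem_Ioi, div_lt_iff₀ hp0] at hκ
  have hκ0 : 0 < κ := pos_of_mul_pos_left (hτ.trans_lt hκ) hp0.le
  have hq : 0 < κ * (1 - p) := mul_pos hκ0 (sub_pos.mpr hp1)
  have hlt : κ * (1 - p) < κ - τ := by linarith
  rw [(hasDerivAt_lambdaStarPersp p τ hκ0.ne' (hq.trans hlt).ne').deriv, sub_sub,
    ← log_mul hκ0.ne' (sub_pos.mpr hp1).ne', sub_pos]
  exact log_lt_log hq hlt

/-- Fix `0 < p < 1`.  For every `τ ≥ 0` there is a unique `κ₀ > τ/p` such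
that `g(κ) = (κ/2)·Λ*(τ/κ)` satisfies `g(κ) < 1` for `τ/p < κ < κ₀`, `g(κ₀) = 1`, and
`g(κ) > 1` for `κ > κ₀`. -/
theorem stmt9 (p : ℝ) (hp0 : 0 < p) (hp1 : p < 1) (τ : ℝ) (hτ : 0 ≤ τ) :
    ∃! κ₀ : ℝ, τ / p < κ₀ ∧
      (∀ κ : ℝ, τ / p < κ → κ < κ₀ → κ / 2 * LambdaStar p (τ / κ) < 1) ∧
      κ₀ / 2 * LambdaStar p (τ / κ₀) = 1 ∧
      (∀ κ : ℝ, κ₀ < κ → 1 < κ / 2 * LambdaStar p (τ / κ)) := by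
  set E : ℝ → ℝ := fun κ => lambdaStarPersp p τ κ / 2
  have hE : EqOn E (fun κ => κ / 2 * LambdaStar p (τ / κ)) (Ioi (τ / p)) := fun κ hκ => by
    have hκ0 : κ ≠ 0 := ((div_nonneg hτ hp0.le).trans_lt hκ).ne'
    simp only [E, ← mul_lambdaStar_div hp0.ne' hp1.ne hκ0]
    ring
  have hEcont : Continuous E := (continuous_lambdaStarPersp p τ).div_const 2
  have hElim : Tendsto E (𝓝[>] (τ / p)) (𝓝 0) := by
    have h := (hEcont.tendsto (τ / p)).mono_left (nhdsWithin_le_nhds (s := Ioi (τ / p)))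
    rwa [show E (τ / p) = 0 by simp [E, lambdaStarPersp_div_self hp0.ne' hp1.ne]] at h
  refine existsUnique_crossing_of_strictMonoOn_Ioi (hEcont.continuousOn.congr hE.symm)
    (((strictMono_id.div_const two_pos).comp_strictMonoOn
      ((strictMonoOn_lambdaStarPersp hp0 hp1 hτ).mono Ioi_subset_Ici_self)).congr hE)
    (hElim.congr' (eventuallyEq_nhdsWithin_of_eqOn hE)) one_pos ?_
  exact (tendsto_id.atTop_div_const two_pos).atTop_mul_pos (lambdaStar_zero_pos hp0 hp1)
    (((continuous_lambdaStar p).tendsto 0).comp (tendsto_const_nhds.div_atTop tendsto_id))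
end

section
/- Let n_1 and n_2 be positive integers, let 0 < p < 1, and let X and Z be independent random variables with X distributed as Bin(n_1, p) and Z distributed as Bin(n_2, p); set Y = 2Z. Then for every real x with 0 ≤ x ≤ p, Pr( X + Y ≤ (n_1 + 2·n_2)·x ) ≤ exp( −(1/2)·(n_1 + 2·n_2)·Λ*(x) ). -/
open MeasureTheory Filter
open scoped ENNReal NNReal

lemma binom_mul_sum (p q s : ℝ) (n : ℕ) :
    ∑ i ∈ Finset.range (n + 1), ((n.choose i : ℝ) * p ^ i * q ^ (n - i)) * s ^ i
      = (p * s + q) ^ n := by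
  rw [add_pow]
  refine Finset.sum_congr rfl fun i _ => ?_
  rw [mul_pow]; ring

lemma chernoff_aux (p q s a : ℝ) (hp : 0 ≤ p) (hq : 0 ≤ q)
    (hs0 : 0 < s) (hs1 : s ≤ 1) (n₁ n₂ : ℕ) :
    ∑ i ∈ Finset.range (n₁ + 1), ∑ j ∈ Finset.range (n₂ + 1),
        (if (i : ℝ) + 2 * (j : ℝ) ≤ a then
          ((n₁.choose i : ℝ) * p ^ i * q ^ (n₁ - i)) *
            ((n₂.choose j : ℝ) * p ^ j * q ^ (n₂ - j))
        else 0)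
      ≤ s ^ (-a) * ((p * s + q) ^ n₁ * (p * s ^ 2 + q) ^ n₂) := by
  have hstep : ∑ i ∈ Finset.range (n₁ + 1), ∑ j ∈ Finset.range (n₂ + 1),
      s ^ (-a) * ((((n₁.choose i : ℝ) * p ^ i * q ^ (n₁ - i)) * s ^ i) *
        (((n₂.choose j : ℝ) * p ^ j * q ^ (n₂ - j)) * (s ^ 2) ^ j))
      = s ^ (-a) * ((p * s + q) ^ n₁ * (p * s ^ 2 + q) ^ n₂) := by
    rw [← binom_mul_sum p q s n₁, ← binom_mul_sum p q (s^2) n₂, Finset.sum_mul_sum,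
      Finset.mul_sum]
    refine Finset.sum_congr rfl fun i _ => ?_
    rw [Finset.mul_sum]
  rw [← hstep]
  refine Finset.sum_le_sum fun i _ => Finset.sum_le_sum fun j _ => ?_
  by_cases h : (i : ℝ) + 2 * (j : ℝ) ≤ a
  · rw [if_pos h]
    have h2 : s ^ (-a) * (s ^ i * (s ^ 2) ^ j) = s ^ ((i : ℝ) + 2 * j - a) := by
      rw [← pow_mul, ← pow_add, ← Real.rpow_natCast s (i + 2 * j), ← Real.rpow_add hs0]
      congr 1
      push_cast; ring
    have h1 : (1 : ℝ) ≤ s ^ (-a) * (s ^ i * (s ^ 2) ^ j) := by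
      rw [h2]
      exact Real.one_le_rpow_of_pos_of_le_one_of_nonpos hs0 hs1 (by linarith)
    have hPi : 0 ≤ (n₁.choose i : ℝ) * p ^ i * q ^ (n₁ - i) := by positivity
    have hPj : 0 ≤ (n₂.choose j : ℝ) * p ^ j * q ^ (n₂ - j) := by positivity
    calc ((n₁.choose i : ℝ) * p ^ i * q ^ (n₁ - i)) * ((n₂.choose j : ℝ) * p ^ j * q ^ (n₂ - j))
        = (((n₁.choose i : ℝ) * p ^ i * q ^ (n₁ - i)) * ((n₂.choose j : ℝ) * p ^ j * q ^ (n₂ - j))) * 1 := by ring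
      _ ≤ (((n₁.choose i : ℝ) * p ^ i * q ^ (n₁ - i)) * ((n₂.choose j : ℝ) * p ^ j * q ^ (n₂ - j))) * (s ^ (-a) * (s ^ i * (s ^ 2) ^ j)) := by
          exact mul_le_mul_of_nonneg_left h1 (by positivity)
      _ = s ^ (-a) * ((((n₁.choose i : ℝ) * p ^ i * q ^ (n₁ - i)) * s ^ i) *
            (((n₂.choose j : ℝ) * p ^ j * q ^ (n₂ - j)) * (s ^ 2) ^ j)) := by ring
  · rw [if_neg h]
    positivity

open scoped Classical in
/-- Let `X ∈ Bin(n₁,p)` and `Z ∈ Bin(n₂,p)` be independent and `Y = 2Z`.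
Then for `0 ≤ x ≤ p`, `Pr(X + Y ≤ (n₁+2n₂)x) ≤ exp(-(1/2)(n₁+2n₂)Λ*(x))`.
The probability is written out as the double sum over the joint distribution. -/
theorem stmt15 (p : ℝ) (hp0 : 0 < p) (hp1 : p < 1) (n₁ n₂ : ℕ) (hn₁ : 0 < n₁) (hn₂ : 0 < n₂)
    (x : ℝ) (hx0 : 0 ≤ x) (hxp : x ≤ p) :
    ∑ i ∈ Finset.range (n₁ + 1), ∑ j ∈ Finset.range (n₂ + 1),
        (if (i : ℝ) + 2 * (j : ℝ) ≤ ((n₁ : ℝ) + 2 * (n₂ : ℝ)) * x then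
          ((n₁.choose i : ℝ) * p ^ i * (1 - p) ^ (n₁ - i)) *
            ((n₂.choose j : ℝ) * p ^ j * (1 - p) ^ (n₂ - j))
        else 0)
      ≤ Real.exp (-(1 / 2) * ((n₁ : ℝ) + 2 * (n₂ : ℝ)) * LambdaStar p x) := by
  have hq0 : (0:ℝ) < 1 - p := by linarith
  rcases eq_or_lt_of_le hx0 with hx0' | hx0'
  · -- x = 0
    subst hx0'
    have hsum : ∑ i ∈ Finset.range (n₁ + 1), ∑ j ∈ Finset.range (n₂ + 1),
        (if (i : ℝ) + 2 * (j : ℝ) ≤ ((n₁ : ℝ) + 2 * (n₂ : ℝ)) * 0 then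
          ((n₁.choose i : ℝ) * p ^ i * (1 - p) ^ (n₁ - i)) *
            ((n₂.choose j : ℝ) * p ^ j * (1 - p) ^ (n₂ - j))
        else 0) = (1 - p) ^ n₁ * (1 - p) ^ n₂ := by
      rw [Finset.sum_eq_single_of_mem 0 (by simp)]
      · rw [Finset.sum_eq_single_of_mem 0 (by simp)]
        · norm_num
        · intro j hj hj0
          rw [if_neg]
          have : (0:ℝ) < (j:ℝ) := by exact_mod_cast Nat.pos_of_ne_zero hj0
          push_cast
          intro hcon
          linarith
      · intro i hi hi0
        refine Finset.sum_eq_zero fun j _ => ?_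
        rw [if_neg]
        have : (0:ℝ) < (i:ℝ) := by exact_mod_cast Nat.pos_of_ne_zero hi0
        have hj : (0:ℝ) ≤ (j:ℝ) := j.cast_nonneg
        intro hcon
        linarith
    rw [hsum]
    have hL : LambdaStar p 0 = - Real.log (1 - p) := by
      simp [LambdaStar, Real.log_div (by linarith : (1:ℝ) - p ≠ 0) (by linarith : (1:ℝ) - p ≠ 0)]
    rw [hL]
    have h1 : (1 - p) ^ n₁ * (1 - p) ^ n₂ = Real.exp (((n₁ : ℝ) + n₂) * Real.log (1 - p)) := by
      rw [← pow_add, ← Real.exp_log (pow_pos hq0 (n₁ + n₂)), Real.log_pow]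
      push_cast; ring_nf
    rw [h1, Real.exp_le_exp]
    have hlogq : Real.log (1 - p) < 0 := Real.log_neg hq0 (by linarith)
    have hn : ((n₁:ℝ) + 2*(n₂:ℝ)) / 2 ≤ (n₁ : ℝ) + n₂ := by
      have : (0:ℝ) ≤ (n₁ : ℝ) := n₁.cast_nonneg
      linarith
    nlinarith
  · -- 0 < x
    have hx1 : x < 1 := lt_of_le_of_lt hxp hp1
    have hx1' : (0:ℝ) < 1 - x := by linarith
    set s₀ : ℝ := x * (1 - p) / ((1 - x) * p) with hs₀def
    have hs₀pos : 0 < s₀ := div_pos (mul_pos hx0' hq0) (mul_pos hx1' hp0)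
    have hs₀le : s₀ ≤ 1 := by
      rw [div_le_one (mul_pos hx1' hp0)]
      nlinarith
    set s := Real.sqrt s₀ with hsdef
    have hs0 : 0 < s := Real.sqrt_pos.mpr hs₀pos
    have hs1 : s ≤ 1 := Real.sqrt_le_one.mpr hs₀le
    have hsq : s ^ 2 = s₀ := Real.sq_sqrt hs₀pos.le
    refine le_trans (chernoff_aux p (1 - p) s (((n₁:ℝ) + 2*(n₂:ℝ)) * x) hp0.le hq0.le hs0 hs1 n₁ n₂) ?_
    have hps : 0 < p * s + (1 - p) := by positivity
    have hps₀ : 0 < p * s₀ + (1 - p) := by positivity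
    have hps2 : 0 < p * s ^ 2 + (1 - p) := by positivity
    -- rewrite as exponentials
    rw [Real.rpow_def_of_pos hs0]
    have e1 : (p * s + (1 - p)) ^ n₁ = Real.exp ((n₁ : ℝ) * Real.log (p * s + (1 - p))) := by
      rw [← Real.exp_log (pow_pos hps n₁), Real.log_pow]
    have e2 : (p * s ^ 2 + (1 - p)) ^ n₂ = Real.exp ((n₂ : ℝ) * Real.log (p * s ^ 2 + (1 - p))) := by
      rw [← Real.exp_log (pow_pos hps2 n₂), Real.log_pow]
    rw [e1, e2, ← Real.exp_add, ← Real.exp_add, Real.exp_le_exp]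
    -- the exponent inequality
    have hxp0 : (0:ℝ) < x / p := div_pos hx0' hp0
    have hxq0 : (0:ℝ) < (1 - x) / (1 - p) := div_pos hx1' hq0
    have hA : Real.log s₀ = Real.log (x / p) - Real.log ((1 - x) / (1 - p)) := by
      have h1 : s₀ = x / p * ((1 - x) / (1 - p))⁻¹ := by
        rw [hs₀def, inv_div, div_mul_div_comm, mul_comm (1 - x) p]
      rw [h1, Real.log_mul hxp0.ne' (inv_pos.mpr hxq0).ne', Real.log_inv]
      ring
    have hB : Real.log (p * s₀ + (1 - p)) = - Real.log ((1 - x) / (1 - p)) := by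
      have hb : ((1 - x) * p) ≠ 0 := (mul_pos hx1' hp0).ne'
      have h2 : p * s₀ + (1 - p) = (1 - p) / (1 - x) := by
        rw [hs₀def, mul_div_assoc', div_add' _ _ _ hb, div_eq_div_iff hb hx1'.ne']
        ring
      rw [h2, Real.log_div hq0.ne' hx1'.ne', Real.log_div hx1'.ne' hq0.ne']
      ring
    have hC : 2 * Real.log (p * s + (1 - p)) ≤ Real.log (p * s₀ + (1 - p)) := by
      have hsq' : (p * s + (1 - p)) ^ 2 ≤ p * s₀ + (1 - p) := by
        rw [← hsq]
        nlinarith [mul_nonneg (mul_nonneg hp0.le hq0.le) (sq_nonneg (s - 1))]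
      calc 2 * Real.log (p * s + (1 - p)) = Real.log ((p * s + (1 - p)) ^ 2) := by
            rw [Real.log_pow]; push_cast; ring
        _ ≤ Real.log (p * s₀ + (1 - p)) := Real.log_le_log (pow_pos hps 2) hsq'
    have hlogs : Real.log s = Real.log s₀ / 2 := Real.log_sqrt hs₀pos.le
    have hC' : (n₁ : ℝ) * Real.log (p * s + (1 - p))
        ≤ (n₁ : ℝ) / 2 * (- Real.log ((1 - x) / (1 - p))) := by
      rw [hB] at hC
      have hn : (0:ℝ) ≤ (n₁ : ℝ) / 2 := by positivity
      nlinarith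
    rw [hsq, hlogs, hA, hB]
    unfold LambdaStar
    nlinarith [hC']
end

section
/- Fix 0 < p < 1 and ε > 0. There exists a constant B = B(p, ε) > 0 such that for every sequence t(n) of positive integers with t(n) ≥ B·ln n for all large n, asymptotically almost surely χ^{t(n)}(G(n,p)) ≥ (1 − ε)·n·p/t(n). -/
open MeasureTheory Filter
open scoped ENNReal NNReal

/-!
If every `t`-dependent set has at most `r` vertices, the colour classes of a `t`-improper
colouring with `χ^t(G)` colours give `n ≤ χ^t(G) · r`; take `r = ⌊t / ((1 - ε) p)⌋`.
A `t`-dependent set of `r + 1` vertices spans at most `(r + 1) t / 2` edges, whereas in `G(n, p)`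
it spans `p (r + 1) r / 2 ≳ (r + 1) t / (2 (1 - ε))` edges on average. The Chernoff bound at
parameter `-log (1 - ε / 2)` makes such a deficit have probability `exp (-Ω (r t))`, which beats
the `n ^ (r + 1)` choices of the set as soon as `t ≥ B log n`.
-/

open ProbabilityTheory Finset

section Bernoulli

variable {p : ℝ}

lemma isProbabilityMeasure_bernoulliBool (hp0 : 0 ≤ p) (hp1 : p ≤ 1) :
    IsProbabilityMeasure (bernoulliBool p) := by
  constructor
  simp only [bernoulliBool, Measure.coe_add, Measure.coe_smul, Pi.add_apply, Pi.smul_apply,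
    measure_univ, smul_eq_mul, mul_one, ENNReal.smul_def]
  rw [← ENNReal.ofReal, ← ENNReal.ofReal, ← ENNReal.ofReal_add hp0 (sub_nonneg.2 hp1)]
  simp

lemma integral_bernoulliBool (hp0 : 0 ≤ p) (hp1 : p ≤ 1) (g : Bool → ℝ) :
    ∫ b, g b ∂bernoulliBool p = p * g true + (1 - p) * g false := by
  simp [bernoulliBool, integral_add_measure, NNReal.smul_def, hp0,
    sub_nonneg.2 hp1, Integrable.of_finite]

lemma measureReal_pi_bernoulliBool_card_filter_le {ι : Type*} [Fintype ι]
    (hp0 : 0 ≤ p) (hp1 : p ≤ 1) (T : Finset ι) (a : ℝ) {l : ℝ} (hl : 0 ≤ l) :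
    (Measure.pi fun _ : ι => bernoulliBool p).real {f | (#{i ∈ T | f i = true} : ℝ) ≤ a} ≤
      Real.exp (l * a) * (p * Real.exp (-l) + (1 - p)) ^ #T := by
  have := isProbabilityMeasure_bernoulliBool hp0 hp1
  set μ := Measure.pi fun _ : ι => bernoulliBool p
  set Y : ι → (ι → Bool) → ℝ := fun i f => if f i then 1 else 0
  have hsum (f : ι → Bool) : (#{i ∈ T | f i = true} : ℝ) = (∑ i ∈ T, Y i) f := by
    simp [Y, Finset.sum_boole]
  have hY (i : ι) : mgf (Y i) μ (-l) = p * Real.exp (-l) + (1 - p) := by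
    have h := mgf_map (μ := μ) (X := fun b : Bool => if b then (1 : ℝ) else 0)
      (measurable_pi_apply i).aemeasurable (t := -l)
      (measurable_of_countable _).aestronglyMeasurable
    rw [(measurePreserving_eval (fun _ : ι => bernoulliBool p) i).map_eq] at h
    rw [show mgf (Y i) μ (-l) = _ from h.symm, mgf, integral_bernoulliBool hp0 hp1]
    simp
  have hindep : iIndepFun Y μ :=
    iIndepFun_pi (X := fun _ (b : Bool) => if b then (1 : ℝ) else 0)
      fun _ => (measurable_of_countable _).aemeasurable
  calc μ.real {f | (#{i ∈ T | f i = true} : ℝ) ≤ a}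
      = μ.real {f | (∑ i ∈ T, Y i) f ≤ a} := by simp_rw [hsum]
    _ ≤ Real.exp (- -l * a) * mgf (∑ i ∈ T, Y i) μ (-l) :=
        measure_le_le_exp_mul_mgf a (by linarith) Integrable.of_finite
    _ = _ := by
        rw [hindep.mgf_sum (fun _ => measurable_of_countable _), prod_congr rfl fun i _ => hY i,
          prod_const, neg_neg]

end Bernoulli

section Dependence

open SimpleGraph

variable {V : Type*} {G : SimpleGraph V} {t : ℕ}

lemma IsTDependent.mono [Finite V] {S T : Set V} (h : IsTDependent G t S) (hTS : T ⊆ S) :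
    IsTDependent G t T :=
  fun v hv => (Set.ncard_le_ncard fun _ hu => Set.mem_sep (hTS hu.1) hu.2).trans (h v (hTS hv))

lemma isTDependent_of_subsingleton {S : Set V} (hS : S.Subsingleton) : IsTDependent G t S :=
  fun v hv => by
    have : {u ∈ S | G.Adj v u} = ∅ :=
      Set.eq_empty_of_forall_notMem fun u hu => G.ne_of_adj hu.2 (hS hv hu.1)
    simp [this]

lemma IsTDependent.two_mul_card_edgeFinset_inter_sym2_le [Fintype V] [DecidableEq V]
    [DecidableRel G.Adj] {S : Finset V} (h : IsTDependent G t ↑S) :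
    2 * #(G.edgeFinset ∩ S.sym2) ≤ #S * t := by
  set H := G.induce (S : Set V)
  have hedges : #(G.edgeFinset ∩ S.sym2) = #H.edgeFinset := by
    have hmap := map_edgeFinset_induce (G := G) (s := (S : Set V))
    rw [Finset.toFinset_coe] at hmap
    rw [← hmap, card_map]
    convert rfl
  have hdeg (v : (S : Set V)) : H.degree v ≤ t := by
    have hmap := map_neighborFinset_induce (G := G) (s := (S : Set V)) v
    rw [Finset.toFinset_coe] at hmap
    rw [← card_neighborFinset_eq_degree, ← card_map (.subtype (· ∈ (S : Set V)))]
    convert h v v.2 using 1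
    convert congrArg card hmap
    rw [← Set.ncard_coe_finset]
    congr 1
    ext u
    simp [and_comm]
  calc 2 * #(G.edgeFinset ∩ S.sym2) = ∑ v, H.degree v := by
        rw [hedges, SimpleGraph.sum_degrees_eq_twice_card_edges]
    _ ≤ ∑ _v : (S : Set V), t := sum_le_sum fun v _ => hdeg v
    _ = #S * t := by simp

lemma card_le_improperChromaticNumber_mul [Fintype V] (r : ℕ)
    (h : ∀ S : Finset V, #S = r + 1 → ¬ IsTDependent G t ↑S) :
    Fintype.card V ≤ improperChromaticNumber G t * r := by
  have hne : {k | ∃ c : V → Fin k, ∀ i, IsTDependent G t {v | c v = i}}.Nonempty :=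
    ⟨_, Fintype.equivFin V, fun _ => isTDependent_of_subsingleton fun _ ha _ hb =>
      (Fintype.equivFin V).injective (ha.trans hb.symm)⟩
  obtain ⟨c, hc⟩ : ∃ c : V → Fin (improperChromaticNumber G t),
      ∀ i, IsTDependent G t {v | c v = i} := Nat.sInf_mem hne
  have hclass (i : Fin (improperChromaticNumber G t)) : #{v | c v = i} ≤ r := by
    by_contra! hlt
    obtain ⟨S, hS, hcard⟩ := exists_subset_card_eq (s := {v | c v = i}) hlt
    exact h S hcard ((hc i).mono fun v hv => by simpa using hS hv)
  calc Fintype.card V = #(univ : Finset V) := card_univ.symm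
    _ ≤ r * #(univ : Finset (Fin (improperChromaticNumber G t))) :=
        card_le_mul_card_image_of_maps_to (f := c) (fun _ _ => mem_univ _) r fun i _ => hclass i
    _ = improperChromaticNumber G t * r := by rw [card_univ, Fintype.card_fin, mul_comm]

end Dependence

section RandomGraph

open SimpleGraph

lemma edgeFinset_fromEdgeSet_inter_sym2 {V : Type*} [DecidableEq V] (f : Sym2 V → Bool)
    (S : Finset V) [Fintype (fromEdgeSet {e | f e = true}).edgeSet] :
    (fromEdgeSet {e | f e = true}).edgeFinset ∩ S.sym2 =
      {e ∈ S.offDiag.image Sym2.mk.uncurry | f e = true} := by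
  ext e
  induction e using Sym2.ind with
  | _ u v =>
    simp only [mem_inter, mem_edgeFinset, edgeSet_fromEdgeSet, mem_sym2_iff, mem_filter,
      mem_image, mem_offDiag, Set.mem_sdiff, Set.mem_ofPred_eq, Sym2.mem_diagSet,
      Sym2.mk_isDiag_iff, Sym2.forall_mem_pair, Prod.exists, Function.uncurry_apply_pair,
      Sym2.eq_iff]
    aesop

variable {n : ℕ} {p : ℝ}

lemma isProbabilityMeasure_erMeasure (hp0 : 0 ≤ p) (hp1 : p ≤ 1) :
    IsProbabilityMeasure (erMeasure n p) := by
  have := isProbabilityMeasure_bernoulliBool hp0 hp1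
  exact Measure.isProbabilityMeasure_map (measurable_of_countable _).aemeasurable

lemma erMeasure_exists_tDependent_le (hp0 : 0 ≤ p) (hp1 : p ≤ 1) (s t : ℕ) {l : ℝ}
    (hl : 0 ≤ l) :
    erMeasure n p {G | ∃ S : Finset (Fin n), #S = s ∧ IsTDependent G t ↑S} ≤
      ENNReal.ofReal (n ^ s * (Real.exp (l * (s * t / 2)) *
        (p * Real.exp (-l) + (1 - p)) ^ s.choose 2)) := by
  classical
  have := isProbabilityMeasure_bernoulliBool hp0 hp1
  set μ := Measure.pi fun _ : Sym2 (Fin n) => bernoulliBool p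
  set bound := Real.exp (l * (s * t / 2)) * (p * Real.exp (-l) + (1 - p)) ^ s.choose 2
  set A : Finset (Fin n) → Set (Sym2 (Fin n) → Bool) := fun S =>
    {f | (#{e ∈ S.offDiag.image Sym2.mk.uncurry | f e = true} : ℝ) ≤ s * t / 2}
  have hA (S : Finset (Fin n)) (hS : S ∈ powersetCard s univ) : μ (A S) ≤ ENNReal.ofReal bound := by
    rw [← ofReal_measureReal]
    refine ENNReal.ofReal_le_ofReal ?_
    have := measureReal_pi_bernoulliBool_card_filter_le hp0 hp1
      (S.offDiag.image Sym2.mk.uncurry) (s * t / 2) hl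
    rwa [Sym2.card_image_offDiag, (mem_powersetCard.1 hS).2] at this
  have hsub : (fun f : Sym2 (Fin n) → Bool => fromEdgeSet {e | f e = true}) ⁻¹'
      {G | ∃ S : Finset (Fin n), #S = s ∧ IsTDependent G t ↑S} ⊆
        ⋃ S ∈ powersetCard s univ, A S := by
    rintro f ⟨S, hS, hdep⟩
    refine Set.mem_biUnion (mem_powersetCard.2 ⟨subset_univ S, hS⟩) ?_
    have := hdep.two_mul_card_edgeFinset_inter_sym2_le
    rw [edgeFinset_fromEdgeSet_inter_sym2, hS] at this
    show (_ : ℝ) ≤ _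
    rw [le_div_iff₀ two_pos, mul_comm]
    exact_mod_cast this
  calc erMeasure n p {G | ∃ S : Finset (Fin n), #S = s ∧ IsTDependent G t ↑S}
      = μ ((fun f : Sym2 (Fin n) → Bool => fromEdgeSet {e | f e = true}) ⁻¹'
          {G | ∃ S : Finset (Fin n), #S = s ∧ IsTDependent G t ↑S}) :=
        Measure.map_apply (measurable_of_countable _) MeasurableSpace.measurableSet_top
    _ ≤ μ (⋃ S ∈ powersetCard s univ, A S) := measure_mono hsub
    _ ≤ ∑ S ∈ powersetCard s univ, μ (A S) := measure_biUnion_finset_le _ _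
    _ ≤ ∑ S ∈ powersetCard s univ, ENNReal.ofReal bound := sum_le_sum hA
    _ = ENNReal.ofReal (n.choose s * bound) := by
        rw [sum_const, card_powersetCard, card_univ, Fintype.card_fin, nsmul_eq_mul,
          ENNReal.ofReal_mul (Nat.cast_nonneg _), ENNReal.ofReal_natCast]
    _ ≤ ENNReal.ofReal (n ^ s * bound) :=
        ENNReal.ofReal_le_ofReal (mul_le_mul_of_nonneg_right
          (by exact_mod_cast Nat.choose_le_pow n s) (by positivity))

end RandomGraph

section Estimates

open Real

lemma add_one_sub_mul_log_one_sub_pos {δ : ℝ} (hδ0 : 0 < δ) (hδ1 : δ < 1) :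
    0 < δ + (1 - δ) * log (1 - δ) := by
  have hpos : 0 < 1 - δ := sub_pos.2 hδ1
  have h := log_lt_sub_one_of_pos (inv_pos.2 hpos) (by rw [Ne, inv_eq_one]; linarith)
  have := mul_lt_mul_of_pos_left h hpos
  rw [log_inv, mul_sub, mul_inv_cancel₀ hpos.ne'] at this
  linarith

/-- At `l = -log (1 - δ)` the base `p e^{-l} + 1 - p` of the Chernoff bound becomes `1 - p δ`. -/
lemma exp_mul_pow_choose_two_le {p δ : ℝ} (hp0 : 0 ≤ p) (hp1 : p ≤ 1) (hδ0 : 0 < δ)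
    (hδ1 : δ < 1) {s t : ℕ} (hts : t ≤ (1 - δ) * p * (s - 1)) :
    exp (-log (1 - δ) * (s * t / 2)) * (p * exp (- -log (1 - δ)) + (1 - p)) ^ s.choose 2 ≤
      exp (-(δ + (1 - δ) * log (1 - δ)) * p * (s * (s - 1) / 2)) := by
  have hpos : 0 < 1 - δ := sub_pos.2 hδ1
  have hl : 0 ≤ -log (1 - δ) := neg_nonneg.2 (log_nonpos hpos.le (by linarith))
  have hbase : p * exp (- -log (1 - δ)) + (1 - p) = 1 - p * δ := by
    rw [neg_neg, exp_log hpos]; ring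
  have hbase0 : 0 ≤ 1 - p * δ := by nlinarith
  have hpow : (1 - p * δ) ^ s.choose 2 ≤ exp (-(p * δ) * (s * (s - 1) / 2)) := by
    rw [← Nat.cast_choose_two, mul_comm (-(p * δ)), exp_nat_mul]
    exact pow_le_pow_left₀ hbase0 (by linarith [add_one_le_exp (-(p * δ))]) _
  have hlin : -log (1 - δ) * (s * t / 2) ≤ -log (1 - δ) * (s * ((1 - δ) * p * (s - 1)) / 2) := by
    gcongr
  rw [hbase]
  calc exp (-log (1 - δ) * (s * t / 2)) * (1 - p * δ) ^ s.choose 2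
      ≤ exp (-log (1 - δ) * (s * ((1 - δ) * p * (s - 1)) / 2)) *
          exp (-(p * δ) * (s * (s - 1) / 2)) :=
        mul_le_mul (exp_le_exp.2 hlin) hpow (pow_nonneg hbase0 _) (exp_nonneg _)
    _ = _ := by rw [← exp_add]; ring_nf

lemma natCast_pow_mul_exp_le_inv {n s : ℕ} {a : ℝ} (hn : 0 < n) (hs : 1 ≤ s)
    (ha : 4 * log n ≤ a) : (n : ℝ) ^ s * exp (-(a * s / 2)) ≤ (n : ℝ)⁻¹ := by
  have hn' : (0 : ℝ) < n := by exact_mod_cast hn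
  have hlog : 0 ≤ log n := log_natCast_nonneg n
  have hs' : (1 : ℝ) ≤ s := by exact_mod_cast hs
  rw [← exp_log hn', ← exp_nat_mul, ← exp_add, ← exp_neg]
  gcongr
  nlinarith

end Estimates

section Main

open Real

variable {p ε : ℝ}

lemma div_le_improperChromaticNumber {V : Type*} [Fintype V] {G : SimpleGraph V} {t : ℕ}
    {q : ℝ} (hq : 0 < q) (ht : 0 < t)
    (h : ∀ S : Finset V, #S = ⌊t / q⌋₊ + 1 → ¬ IsTDependent G t ↑S) :
    Fintype.card V * q / t ≤ improperChromaticNumber G t := by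
  have hcard := card_le_improperChromaticNumber_mul _ h
  rw [div_le_iff₀ (by exact_mod_cast ht), ← le_div_iff₀ hq]
  calc (Fintype.card V : ℝ) ≤ improperChromaticNumber G t * ⌊t / q⌋₊ := by exact_mod_cast hcard
    _ ≤ improperChromaticNumber G t * (t / q) := by gcongr; exact Nat.floor_le (by positivity)
    _ = _ := by ring

lemma le_mul_floor_div (hp0 : 0 < p) (hp1 : p ≤ 1) (hε0 : 0 < ε) (hε1 : ε < 1) {x : ℝ}
    (hx : 2 ≤ ε * x) : x ≤ (1 - ε / 2) * p * ⌊x / ((1 - ε) * p)⌋₊ := by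
  have hεp : 0 < (1 - ε) * p := mul_pos (by linarith) hp0
  set y := x / ((1 - ε) * p)
  have hxy : x = (1 - ε) * p * y := (mul_div_cancel₀ _ hεp.ne').symm
  have hεxy : ε * x ≤ ε * y := by
    gcongr
    exact le_div_self (by nlinarith) hεp (by nlinarith)
  have := mul_le_mul_of_nonneg_left (Nat.sub_one_lt_floor y).le
    (by nlinarith : 0 ≤ (1 - ε / 2) * p)
  nlinarith

lemma erMeasure_improperChromaticNumber_lt_le (hp0 : 0 < p) (hp1 : p < 1) (hε0 : 0 < ε)
    (hε1 : ε < 1) {n t : ℕ} (hn : 0 < n)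
    (ht4 : 4 * log n ≤ (ε / 2 + (1 - ε / 2) * log (1 - ε / 2)) * t) (ht2 : 2 ≤ ε * t) :
    erMeasure n p {G | (improperChromaticNumber G t : ℝ) < (1 - ε) * n * p / t} ≤
      ENNReal.ofReal (n : ℝ)⁻¹ := by
  set δ := ε / 2 with hδ
  set c := δ + (1 - δ) * log (1 - δ)
  have hc : 0 < c := add_one_sub_mul_log_one_sub_pos (by positivity) (by linarith)
  set r := ⌊(t : ℝ) / ((1 - ε) * p)⌋₊
  have hrt : (t : ℝ) ≤ (1 - δ) * p * r := le_mul_floor_div hp0 hp1.le hε0 hε1 ht2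
  have hsub : {G : SimpleGraph (Fin n) | (improperChromaticNumber G t : ℝ) < (1 - ε) * n * p / t} ⊆
      {G | ∃ S : Finset (Fin n), #S = r + 1 ∧ IsTDependent G t ↑S} := by
    intro G hG
    show ∃ S : Finset (Fin n), #S = r + 1 ∧ IsTDependent G t ↑S
    by_contra! hno
    have hχ := div_le_improperChromaticNumber (G := G) (q := (1 - ε) * p)
      (mul_pos (by linarith) hp0)
      (by exact_mod_cast (by nlinarith : (0 : ℝ) < t)) hno
    rw [Fintype.card_fin, show (n : ℝ) * ((1 - ε) * p) = (1 - ε) * n * p by ring] at hχ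
    exact hχ.not_gt hG
  have hl : 0 ≤ -log (1 - δ) := neg_nonneg.2 (log_nonpos (by linarith) (by linarith))
  have hcpr : 4 * log n ≤ c * p * r := by
    have : (t : ℝ) ≤ p * r := by nlinarith [mul_nonneg hp0.le (Nat.cast_nonneg r : (0 : ℝ) ≤ r)]
    nlinarith
  calc erMeasure n p {G | (improperChromaticNumber G t : ℝ) < (1 - ε) * n * p / t}
      ≤ erMeasure n p {G | ∃ S : Finset (Fin n), #S = r + 1 ∧ IsTDependent G t ↑S} :=
        measure_mono hsub
    _ ≤ ENNReal.ofReal (n ^ (r + 1) * (exp (-log (1 - δ) * ((r + 1 : ℕ) * t / 2)) *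
          (p * exp (- -log (1 - δ)) + (1 - p)) ^ (r + 1).choose 2)) :=
        erMeasure_exists_tDependent_le hp0.le hp1.le (r + 1) t hl
    _ ≤ ENNReal.ofReal (n ^ (r + 1) * exp (-c * p * ((r + 1 : ℕ) * ((r + 1 : ℕ) - 1) / 2))) := by
        refine ENNReal.ofReal_le_ofReal (mul_le_mul_of_nonneg_left
          (exp_mul_pow_choose_two_le hp0.le hp1.le (by linarith) (by linarith) ?_) (by positivity))
        push_cast
        simpa using hrt
    _ = ENNReal.ofReal (n ^ (r + 1) * exp (-(c * p * r * (r + 1 : ℕ) / 2))) := by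
        push_cast
        ring_nf
    _ ≤ ENNReal.ofReal (n : ℝ)⁻¹ :=
        ENNReal.ofReal_le_ofReal (natCast_pow_mul_exp_le_inv (by omega) (by omega) hcpr)

lemma exists_tendsto_erMeasure_le_improperChromaticNumber (hp0 : 0 < p) (hp1 : p < 1)
    (hε0 : 0 < ε) (hε1 : ε < 1) :
    ∃ B : ℝ, 0 < B ∧ ∀ t : ℕ → ℕ, (∀ᶠ n : ℕ in atTop, B * log n ≤ (t n : ℝ)) →
      Tendsto (fun n => erMeasure n p
          {G | (1 - ε) * (n : ℝ) * p / (t n : ℝ) ≤ (improperChromaticNumber G (t n) : ℝ)})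
        atTop (nhds 1) := by
  have hc := add_one_sub_mul_log_one_sub_pos (δ := ε / 2) (by positivity) (by linarith)
  refine ⟨4 / (ε / 2 + (1 - ε / 2) * log (1 - ε / 2)) + 2 / ε, by positivity, fun t ht => ?_⟩
  have := fun n => isProbabilityMeasure_erMeasure (n := n) hp0.le hp1.le
  have hbad : Tendsto (fun n => erMeasure n p
      {G | (improperChromaticNumber G (t n) : ℝ) < (1 - ε) * n * p / t n}) atTop (nhds 0) := by
    refine tendsto_of_tendsto_of_tendsto_of_le_of_le' tendsto_const_nhds
      (by simpa using ENNReal.tendsto_ofReal tendsto_inv_atTop_nhds_zero_nat)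
      (Eventually.of_forall fun _ => zero_le) ?_
    filter_upwards [ht, eventually_ge_atTop 3] with n hn h3
    have hlog : 1 ≤ log n := by
      rw [le_log_iff_exp_le (by positivity)]
      have : (3 : ℝ) ≤ n := by exact_mod_cast h3
      linarith [exp_one_lt_d9]
    refine erMeasure_improperChromaticNumber_lt_le hp0 hp1 hε0 hε1 (by omega) ?_ ?_
    · have : 4 / (ε / 2 + (1 - ε / 2) * log (1 - ε / 2)) * log n ≤ t n := by
        nlinarith [div_pos two_pos hε0]
      rwa [div_mul_eq_mul_div, div_le_iff₀' hc] at this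
    · have : 2 / ε ≤ t n := by nlinarith [div_pos four_pos hc]
      rwa [div_le_iff₀' hε0] at this
  have hgood (n : ℕ) : erMeasure n p
      {G | (1 - ε) * (n : ℝ) * p / (t n : ℝ) ≤ (improperChromaticNumber G (t n) : ℝ)} =
      1 - erMeasure n p
        {G | (improperChromaticNumber G (t n) : ℝ) < (1 - ε) * n * p / t n} := by
    rw [← prob_compl_eq_one_sub MeasurableSpace.measurableSet_top]
    congr 1
    ext G
    simp
  simpa [hgood] using ENNReal.Tendsto.sub tendsto_const_nhds hbad (Or.inl ENNReal.one_ne_top)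

end Main

/-- Fix `0 < p < 1` and `ε > 0`.  There is `B = B(p,ε) > 0` such that for
every sequence of positive integers `t(n)` with `t(n) ≥ B·ln n` for all large `n`,
a.a.s. `χ^{t(n)}(G(n,p)) ≥ (1-ε)·n·p/t(n)`. -/
theorem stmt16 (p : ℝ) (hp0 : 0 < p) (hp1 : p < 1) (ε : ℝ) (hε : 0 < ε) :
    ∃ B : ℝ, 0 < B ∧
      ∀ t : ℕ → ℕ, (∀ n, 0 < t n) → (∀ᶠ n : ℕ in atTop, B * Real.log n ≤ (t n : ℝ)) →
        Tendsto (fun n => erMeasure n p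
            {G | (1 - ε) * (n : ℝ) * p / (t n : ℝ) ≤ (improperChromaticNumber G (t n) : ℝ)})
          atTop (nhds 1) := by
  obtain ⟨B, hB, hmain⟩ := exists_tendsto_erMeasure_le_improperChromaticNumber hp0 hp1
    (lt_min hε one_half_pos) (min_le_right ε (1 / 2) |>.trans_lt one_half_lt_one)
  refine ⟨B, hB, fun t _ ht => ?_⟩
  have := fun n => isProbabilityMeasure_erMeasure (n := n) hp0.le hp1.le
  have hε' (n : ℕ) : (1 - ε) * (n : ℝ) * p / t n ≤ (1 - min ε (1 / 2)) * n * p / t n := by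
    gcongr
    exact min_le_left ε (1 / 2)
  exact tendsto_of_tendsto_of_tendsto_of_le_of_le (hmain t ht) tendsto_const_nhds
    (fun n => measure_mono (Set.ofPred_subset_ofPred.2 fun _ => (hε' n).trans))
    fun _ => prob_le_one
end
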